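/- Let G be a graph with clique number at most w ≥ 2. Suppose K is a maximum clique of G and for each v ∈ K set P_v := V(G) \ (K ∪ N_G(v)). If G is connected and not complete, then there exists v ∈ K with χ(P_v) ≥ w^{-1}·χ(G); consequently G contains an anticomplete pair (P,Q) of nonempty sets with G[P], G[Q] connected and χ(P) ≥ w^{-1}·χ(G). -/

import Mathlib

open SimpleGraph

/-- The chromatic number of the subgraph of `G` induced on `S`, as a natural number. -/
noncomputable def chiSet {V : Type*} (G : SimpleGraph V) (S : Set V) : ℕ :=
  (G.induce S).chromaticNumber.toNat

/-- The chromatic number of `G`, as a natural number. -/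
noncomputable def chi {V : Type*} (G : SimpleGraph V) : ℕ :=
  G.chromaticNumber.toNat

/-- `(A, B)` is an anticomplete pair: no edge of `G` joins `A` and `B`. -/
def Anticomplete {V : Type*} (G : SimpleGraph V) (A B : Set V) : Prop :=
  ∀ a ∈ A, ∀ b ∈ B, ¬ G.Adj a b

/-- `G` is `H`-free: no induced subgraph of `G` is isomorphic to `H`. -/
def FreeOf {V W : Type*} (G : SimpleGraph V) (H : SimpleGraph W) : Prop :=
  IsEmpty (H ↪g G)

/-!
Since `K` is a maximal clique, the sets `{v} ∪ P_v` with `v ∈ K` cover `V(G)`, and `v` has no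
neighbour in `P_v`, so each of them is colourable with `m := max_v χ(P_v)` colours, and `G` with
`|K| · m ≤ w · m` colours.
Some vertex lies outside `K` because `G` is not complete, so `m ≥ 1` and the maximising `P_v` is
nonempty. Finally, the chromatic number of a finite vertex set is attained on one of its
connected components: that component is `P`, and `Q := {v}`.
-/

namespace SimpleGraph

variable {V : Type*} {G : SimpleGraph V}

lemma chiSet_le_of_colorable {S : Set V} {n : ℕ} (h : (G.induce S).Colorable n) :
    chiSet G S ≤ n :=
  ENat.toNat_le_of_le_natCast (chromaticNumber_le_iff_colorable.mpr h)

lemma chi_le_of_colorable {n : ℕ} (h : G.Colorable n) : chi G ≤ n :=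
  ENat.toNat_le_of_le_natCast (chromaticNumber_le_iff_colorable.mpr h)

lemma colorable_induce_chiSet [Finite V] (S : Set V) : (G.induce S).Colorable (chiSet G S) :=
  colorable_chromaticNumber_of_fintype _

lemma chiSet_pos_iff [Finite V] {S : Set V} : 0 < chiSet G S ↔ S.Nonempty := by
  refine ⟨fun h => ?_, fun hS => Nat.pos_of_ne_zero fun h => ?_⟩
  · by_contra hS
    rw [Set.not_nonempty_iff_eq_empty] at hS
    subst hS
    simp [chiSet] at h
  · have := colorable_induce_chiSet (G := G) S
    rw [h, colorable_zero_iff] at this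
    exact this.false ⟨_, hS.some_mem⟩

lemma IsClique.card_le_of_cliqueFree {s : Finset V} {n : ℕ} (hs : G.IsClique s)
    (hG : G.CliqueFree (n + 1)) : s.card ≤ n :=
  Nat.le_of_not_lt fun h => hG.mono h s ⟨hs, rfl⟩

lemma Colorable.induce_union {A B : Set V} {n : ℕ} (hA : (G.induce A).Colorable n)
    (hB : (G.induce B).Colorable n) (hAB : Anticomplete G A B) :
    (G.induce (A ∪ B)).Colorable n := by
  classical
  obtain ⟨cA⟩ := hA
  obtain ⟨cB⟩ := hB
  refine ⟨Coloring.mk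
    (fun x => if hx : (x : V) ∈ A then cA ⟨x, hx⟩ else cB ⟨x, x.2.resolve_left hx⟩) ?_⟩
  rintro ⟨x, hx⟩ ⟨y, hy⟩ (hxy : G.Adj x y)
  by_cases hxA : x ∈ A <;> by_cases hyA : y ∈ A
  · simp only [dif_pos hxA, dif_pos hyA]
    exact cA.valid hxy
  · exact absurd hxy (hAB x hxA y (hy.resolve_left hyA))
  · exact absurd hxy.symm (hAB y hyA x (hx.resolve_left hxA))
  · simp only [dif_neg hxA, dif_neg hyA]
    exact cB.valid hxy

lemma Colorable.induce_insert {P : Set V} {v : V} {n : ℕ} (hP : (G.induce P).Colorable n)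
    (hn : n ≠ 0) (hv : ∀ x ∈ P, ¬ G.Adj v x) : (G.induce (insert v P)).Colorable n := by
  have hsingle : (G.induce {v}).Colorable n :=
    ⟨Coloring.mk (fun _ => ⟨0, Nat.pos_of_ne_zero hn⟩)
      fun {x y} hxy => (hxy.ne (Subsingleton.elim x y)).elim⟩
  exact hsingle.induce_union hP fun a ha b hb => ha ▸ hv b hb

lemma colorable_card_mul_of_cover {ι : Type*} (s : Finset ι) (S : ι → Set V) {n : ℕ}
    (hcover : ∀ x, ∃ i ∈ s, x ∈ S i) (hS : ∀ i ∈ s, (G.induce (S i)).Colorable n) :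
    G.Colorable (s.card * n) := by
  choose i hi hxi using hcover
  let c : ∀ j ∈ s, (G.induce (S j)).Coloring (Fin n) := fun j hj => (hS j hj).some
  have key : ∀ {x y j k} (hj : j ∈ s) (hk : k ∈ s) (hxj : x ∈ S j) (hyk : y ∈ S k),
      G.Adj x y → j = k → c j hj ⟨x, hxj⟩ ≠ c k hk ⟨y, hyk⟩ := by
    rintro x y j _ hj _ hxj hyk hxy rfl
    exact (c j hj).valid (show (G.induce (S j)).Adj ⟨x, hxj⟩ ⟨y, hyk⟩ from hxy)
  let C : G.Coloring (s × Fin n) :=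
    Coloring.mk (fun x => (⟨i x, hi x⟩, c (i x) (hi x) ⟨x, hxi x⟩)) fun {x y} hxy heq => by
      rw [Prod.ext_iff, Subtype.ext_iff] at heq
      exact key (hi x) (hi y) (hxi x) (hxi y) hxy heq.1 heq.2
  simpa using C.colorable

lemma exists_mem_insert_sdiff_neighborSet_of_maximal {K : Finset V}
    (hK : Maximal G.IsClique (K : Set V)) (x : V) :
    ∃ v ∈ K, x ∈ insert v (Set.univ \ (↑K ∪ G.neighborSet v)) := by
  by_cases hxK : x ∈ K
  · exact ⟨x, hxK, Set.mem_insert x _⟩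
  by_contra! h
  have hadj : ∀ v ∈ K, G.Adj v x := fun v hv => by
    by_contra hvx
    exact h v hv (Set.mem_insert_of_mem _ ⟨trivial, by simp [hxK, hvx]⟩)
  have hins : G.IsClique (insert x (K : Set V)) :=
    hK.prop.insert fun v hv _ => (hadj v hv).symm
  rw [← Finset.mem_coe, hK.eq_of_subset hins (Set.subset_insert x _)] at hxK
  exact hxK (Set.mem_insert x _)

lemma exists_anticomplete_split_of_not_connected {S : Set V} (hS : S.Nonempty)
    (hconn : ¬ (G.induce S).Connected) : ∃ A B : Set V,
      A.Nonempty ∧ B.Nonempty ∧ A ⊂ S ∧ B ⊂ S ∧ A ∪ B = S ∧ Anticomplete G A B := by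
  have : Nonempty S := hS.to_subtype
  obtain ⟨x, y, hxy⟩ : ∃ x y : S, ¬ (G.induce S).Reachable x y := by
    by_contra! h
    exact hconn (Connected.mk h)
  set A : Set V := Subtype.val '' {z : S | (G.induce S).Reachable x z}
  have hAS : A ⊆ S := by
    rintro _ ⟨z, _, rfl⟩
    exact z.2
  have hxA : (x : V) ∈ A := ⟨x, Reachable.refl x, rfl⟩
  have hyA : (y : V) ∉ A := by
    rintro ⟨z, hz, hzy⟩
    exact hxy (Subtype.ext hzy ▸ hz)
  refine ⟨A, S \ A, ⟨x, hxA⟩, ⟨y, y.2, hyA⟩, ⟨hAS, fun h => hyA (h y.2)⟩,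
    ⟨Set.sdiff_subset, fun h => (h x.2).2 hxA⟩, Set.union_sdiff_cancel hAS, ?_⟩
  rintro a ⟨z, hz, rfl⟩ b ⟨hbS, hbA⟩ hadj
  exact hbA ⟨⟨b, hbS⟩, hz.trans (show (G.induce S).Adj z ⟨b, hbS⟩ from hadj).reachable, rfl⟩

lemma chiSet_union_le_max [Finite V] {A B : Set V} (hAB : Anticomplete G A B) :
    chiSet G (A ∪ B) ≤ max (chiSet G A) (chiSet G B) :=
  chiSet_le_of_colorable <| Colorable.induce_union
    ((colorable_induce_chiSet A).mono (le_max_left _ _))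
    ((colorable_induce_chiSet B).mono (le_max_right _ _)) hAB

lemma exists_connected_subset_chiSet_le [Finite V] {S : Set V} (hS : S.Nonempty) :
    ∃ P ⊆ S, P.Nonempty ∧ (G.induce P).Connected ∧ chiSet G S ≤ chiSet G P := by
  induction h : S.ncard using Nat.strong_induction_on generalizing S with
  | _ n ih =>
  by_cases hconn : (G.induce S).Connected
  · exact ⟨S, subset_rfl, hS, hconn, le_rfl⟩
  obtain ⟨A, B, hAne, hBne, hA, hB, hAB, hanti⟩ :=
    exists_anticomplete_split_of_not_connected hS hconn
  have descend : ∀ C ⊂ S, C.Nonempty → chiSet G S ≤ chiSet G C →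
      ∃ P ⊆ S, P.Nonempty ∧ (G.induce P).Connected ∧ chiSet G S ≤ chiSet G P := by
    intro C hC hCne hle
    obtain ⟨P, hPC, hPne, hPconn, hPC'⟩ := ih _ (h ▸ Set.ncard_lt_ncard hC) hCne rfl
    exact ⟨P, hPC.trans hC.subset, hPne, hPconn, hle.trans hPC'⟩
  rcases le_max_iff.mp (hAB ▸ chiSet_union_le_max hanti) with hle | hle
  · exact descend A hA hAne hle
  · exact descend B hB hBne hle

end SimpleGraph

theorem stmt_15_general {V : Type*} [Fintype V] (w : ℕ) (G : SimpleGraph V)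
    (hnotcomplete : ∃ a b : V, a ≠ b ∧ ¬ G.Adj a b)
    (hclique : G.CliqueFree (w + 1)) (K : Finset V) (hK : G.IsClique ↑K)
    (hKmax : ∀ K' : Finset V, G.IsClique ↑K' → K'.card ≤ K.card) :
    (∃ v ∈ K, chi G ≤ w * chiSet G (Set.univ \ (↑K ∪ G.neighborSet v))) ∧
      ∃ P Q : Set V, P.Nonempty ∧ Q.Nonempty ∧ Anticomplete G P Q ∧
        (G.induce P).Connected ∧ (G.induce Q).Connected ∧
        chi G ≤ w * chiSet G P := by
  set P : V → Set V := fun v => Set.univ \ (↑K ∪ G.neighborSet v)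
  have hcover := exists_mem_insert_sdiff_neighborSet_of_maximal
    (IsMaximumClique.isMaximalClique K ⟨hK, hKmax⟩)
  have hvP : ∀ v x, x ∈ P v → ¬ G.Adj v x := fun v x hx => by simp_all [P]
  obtain ⟨a, b, hab, hnadj⟩ := hnotcomplete
  obtain ⟨u₀, hu₀K, -⟩ := hcover a
  obtain ⟨v, hvK, hmax⟩ := K.exists_max_image (fun v => chiSet G (P v)) ⟨u₀, hu₀K⟩
  have hPv : (P v).Nonempty := by
    obtain ⟨x, hxK⟩ : ∃ x, x ∉ K := by
      by_contra! h
      exact hnadj (hK (h a) (h b) hab)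
    obtain ⟨u, huK, hxu⟩ := hcover x
    have hxPu : x ∈ P u := hxu.resolve_left fun h => hxK (h ▸ huK)
    exact chiSet_pos_iff.mp ((chiSet_pos_iff.mpr ⟨x, hxPu⟩).trans_le (hmax u huK))
  have hchi : chi G ≤ w * chiSet G (P v) := calc
    chi G ≤ K.card * chiSet G (P v) := chi_le_of_colorable <|
      colorable_card_mul_of_cover K (fun u => insert u (P u)) hcover fun u hu =>
        ((colorable_induce_chiSet (P u)).mono (hmax u hu)).induce_insert
          (chiSet_pos_iff.mpr hPv).ne' (hvP u)
    _ ≤ w * chiSet G (P v) := Nat.mul_le_mul_right _ (hK.card_le_of_cliqueFree hclique)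
  obtain ⟨Q, hQP, hQne, hQconn, hQchi⟩ := exists_connected_subset_chiSet_le (G := G) hPv
  refine ⟨⟨v, hvK, hchi⟩, Q, {v}, hQne, Set.singleton_nonempty v,
    fun x hx y hy hxy => hvP v x (hQP hx) (hy ▸ hxy.symm), hQconn,
    Connected.of_subsingleton, hchi.trans (Nat.mul_le_mul_left w hQchi)⟩

/-- Let `G` be connected, not complete, with clique number at most
`w ≥ 2`, and let `K` be a maximum clique of `G` with `P_v := V(G) \ (K ∪ N_G(v))` for
`v ∈ K`. Then some `v ∈ K` has `χ(P_v) ≥ w⁻¹·χ(G)`; consequently `G` contains an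
anticomplete pair `(P, Q)` of nonempty sets with `G[P]`, `G[Q]` connected and
`χ(P) ≥ w⁻¹·χ(G)`. -/
theorem stmt_15 {V : Type*} [Fintype V] (w : ℕ) (hw : 2 ≤ w) (G : SimpleGraph V)
    (hconn : G.Connected) (hnotcomplete : ∃ a b : V, a ≠ b ∧ ¬ G.Adj a b)
    (hclique : G.CliqueFree (w + 1)) (K : Finset V) (hK : G.IsClique ↑K)
    (hKmax : ∀ K' : Finset V, G.IsClique ↑K' → K'.card ≤ K.card) :
    (∃ v ∈ K, chi G ≤ w * chiSet G (Set.univ \ (↑K ∪ G.neighborSet v))) ∧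
      ∃ P Q : Set V, P.Nonempty ∧ Q.Nonempty ∧ Anticomplete G P Q ∧
        (G.induce P).Connected ∧ (G.induce Q).Connected ∧
        chi G ≤ w * chiSet G P :=
  stmt_15_general w G hnotcomplete hclique K hK hKmax
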